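/- arXiv:0803.2593 — 2 statements merged into one kernel-verified Lean document; each statement's English description precedes it below -/
import Mathlib

section
/- With U unitary on H₀ ⊗ H, β = |X₀⟩⟨X₀|, ρ a density operator on H₀, and P_i an orthogonal projection on H with matrix entries p^i_{kl} = ⟨X_k, P_i X_l⟩ in the basis (X₀,...,X_N), the partial trace over H of (I⊗P_i) U (ρ⊗β) U* (I⊗P_i) equals Σ_{0≤k,l≤N} p^i_{kl} U_{k0} ρ U_{l0}*, where U_{kl} are the block entries of U in the basis Ω_m ⊗ X_k. -/
/-!
Pairing against `X ⊗ 1` and cycling the trace moves both copies of `1 ⊗ P` onto the test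
operator, where they merge into `X ⊗ P` since `P² = P`. Pairing a matrix against `X ⊗ Q`
only sees the blocks of the matrix, weighted by the entries of `Q`, and the `(k, l)` block
of `U (ρ ⊗ |X₀⟩⟨X₀|) U*` is `U_{k0} ρ U_{l0}*`. A matrix is determined by its traces against
all `X`, which identifies the partial trace.
-/

open Matrix
open scoped Kronecker ComplexOrder

namespace Matrix

variable {m m' n n' R : Type*}

def partialTraceRight [Fintype n] [AddCommMonoid R] (W : Matrix (m × n) (m × n) R) :
    Matrix m m R :=
  of fun a b => ∑ j, W (a, j) (b, j)

def subBlock (W : Matrix (m × n) (m' × n') R) (k : n) (l : n') : Matrix m m' R :=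
  of fun a b => W (a, k) (b, l)

section CommSemiring

variable [Fintype m] [Fintype n] [CommSemiring R]

theorem trace_mul_kronecker_one [DecidableEq n] (W : Matrix (m × n) (m × n) R)
    (X : Matrix m m R) :
    trace (W * (X ⊗ₖ 1)) = trace (partialTraceRight W * X) := by
  simp only [trace, diag, mul_apply, kronecker_apply, one_apply, partialTraceRight, of_apply,
    Fintype.sum_prod_type]
  simp only [mul_ite, mul_one, mul_zero, Finset.sum_ite_eq', Finset.mem_univ, if_true,
    Finset.sum_mul]
  exact Finset.sum_congr rfl fun _ _ => Finset.sum_comm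

theorem trace_mul_kronecker [DecidableEq m] [DecidableEq n] (W : Matrix (m × n) (m × n) R)
    (X : Matrix m m R) (Q : Matrix n n R) :
    trace (W * (X ⊗ₖ Q)) = trace (partialTraceRight (W * (1 ⊗ₖ Q)) * X) := by
  rw [← trace_mul_kronecker_one, Matrix.mul_assoc, ← mul_kronecker_mul, Matrix.one_mul,
    Matrix.mul_one]

theorem partialTraceRight_mul_one_kronecker [DecidableEq m] (W : Matrix (m × n) (m × n) R)
    (Q : Matrix n n R) :
    partialTraceRight (W * (1 ⊗ₖ Q)) = ∑ k, ∑ l, Q l k • subBlock W k l := by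
  ext a b
  simp only [partialTraceRight, subBlock, of_apply, mul_apply, kronecker_apply, one_apply,
    Fintype.sum_prod_type, sum_apply, smul_apply, smul_eq_mul]
  simp [ite_mul, mul_comm]

theorem trace_one_kronecker_mul_mul_one_kronecker_mul_kronecker_one [DecidableEq m]
    [DecidableEq n] (A B : Matrix n n R) (W : Matrix (m × n) (m × n) R) (X : Matrix m m R) :
    trace ((1 ⊗ₖ A) * W * (1 ⊗ₖ B) * (X ⊗ₖ 1)) = trace (W * (X ⊗ₖ (B * A))) := by
  rw [Matrix.mul_assoc, Matrix.mul_assoc, trace_mul_comm, Matrix.mul_assoc, Matrix.mul_assoc,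
    ← mul_kronecker_mul, ← mul_kronecker_mul]
  simp

end CommSemiring

theorem subBlock_mul_kronecker_single_mul_conjTranspose [Fintype m'] [Fintype n']
    [DecidableEq n'] [Semiring R] [StarRing R] (U : Matrix (m × n) (m' × n') R)
    (ρ : Matrix m' m' R) (i₀ : n') (k l : n) :
    subBlock (U * (ρ ⊗ₖ single i₀ i₀ 1) * Uᴴ) k l =
      subBlock U k i₀ * ρ * (subBlock U l i₀)ᴴ := by
  ext a b
  simp [subBlock, mul_apply, single, Fintype.sum_prod_type, ite_and, Finset.sum_mul]

end Matrix

theorem partial_trace_measurement_blocks_general (K N : ℕ)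
    (U : Matrix (Fin (K + 1) × Fin (N + 1)) (Fin (K + 1) × Fin (N + 1)) ℂ)
    (ρ : Matrix (Fin (K + 1)) (Fin (K + 1)) ℂ)
    (P : Matrix (Fin (N + 1)) (Fin (N + 1)) ℂ)
    (hPidem : P * P = P)
    (η : Matrix (Fin (K + 1)) (Fin (K + 1)) ℂ)
    (hη : ∀ X : Matrix (Fin (K + 1)) (Fin (K + 1)) ℂ,
      (η * X).trace =
        ((((1 : Matrix (Fin (K + 1)) (Fin (K + 1)) ℂ) ⊗ₖ P) * U *
            (ρ ⊗ₖ Matrix.single (0 : Fin (N + 1)) (0 : Fin (N + 1)) (1 : ℂ)) * Uᴴ *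
            ((1 : Matrix (Fin (K + 1)) (Fin (K + 1)) ℂ) ⊗ₖ P)) *
          (X ⊗ₖ (1 : Matrix (Fin (N + 1)) (Fin (N + 1)) ℂ))).trace) :
    η = ∑ k : Fin (N + 1), ∑ l : Fin (N + 1),
        P l k • (Matrix.of (fun a b => U (a, k) (b, 0)) * ρ *
          (Matrix.of (fun a b => U (a, l) (b, 0)))ᴴ) := by
  rw [ext_iff_trace_mul_right]
  intro X
  have hsandwich := trace_one_kronecker_mul_mul_one_kronecker_mul_kronecker_one P P
    (U * (ρ ⊗ₖ single 0 0 1) * Uᴴ) X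
  simp only [Matrix.mul_assoc] at hsandwich hη
  rw [hη, hsandwich, hPidem]
  simp only [← Matrix.mul_assoc]
  rw [trace_mul_kronecker, partialTraceRight_mul_one_kronecker]
  simp only [subBlock_mul_kronecker_single_mul_conjTranspose]
  rfl

/-- With `U` unitary on `H₀ ⊗ H`, `β = |X₀⟩⟨X₀|` the projection on the
first basis vector of `H`, `ρ` a density operator on `H₀` and `P` an orthogonal
projection on `H`, the partial trace over `H` of `(I⊗P) U (ρ⊗β) U* (I⊗P)` equals
`Σ_{k,l} p_{kl} U_{k0} ρ U_{l0}*`, where `p_{kl} = ⟨X_k, P X_l⟩` (inner product linear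
in its first argument, i.e. the `(l,k)` matrix entry of `P`) and `U_{ij}` are the block
entries of `U`. -/
theorem partial_trace_measurement_blocks (K N : ℕ)
    (U : Matrix (Fin (K + 1) × Fin (N + 1)) (Fin (K + 1) × Fin (N + 1)) ℂ)
    (hU : Uᴴ * U = 1) (hU' : U * Uᴴ = 1)
    (ρ : Matrix (Fin (K + 1)) (Fin (K + 1)) ℂ) (hρ : ρ.PosSemidef) (hρtr : ρ.trace = 1)
    (P : Matrix (Fin (N + 1)) (Fin (N + 1)) ℂ)
    (hPherm : Pᴴ = P) (hPidem : P * P = P)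
    (η : Matrix (Fin (K + 1)) (Fin (K + 1)) ℂ)
    (hη : ∀ X : Matrix (Fin (K + 1)) (Fin (K + 1)) ℂ,
      (η * X).trace =
        ((((1 : Matrix (Fin (K + 1)) (Fin (K + 1)) ℂ) ⊗ₖ P) * U *
            (ρ ⊗ₖ Matrix.single (0 : Fin (N + 1)) (0 : Fin (N + 1)) (1 : ℂ)) * Uᴴ *
            ((1 : Matrix (Fin (K + 1)) (Fin (K + 1)) ℂ) ⊗ₖ P)) *
          (X ⊗ₖ (1 : Matrix (Fin (N + 1)) (Fin (N + 1)) ℂ))).trace) :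
    η = ∑ k : Fin (N + 1), ∑ l : Fin (N + 1),
        P l k • (Matrix.of (fun a b => U (a, k) (b, 0)) * ρ *
          (Matrix.of (fun a b => U (a, l) (b, 0)))ᴴ) :=
  partial_trace_measurement_blocks_general K N U ρ P hPidem η hη
end

section
/- Let (ρ_n(t))_{t≥0} be defined by ρ_n(t) = ρ_{[nt]} from a discrete process (ρ_k) adapted to (M_k^{(n)}) satisfying E[‖ρ_l - ρ_r‖² | M_r^{(n)}] ≤ K(l-r)/n a.s. for all r < l. Then for all t₁ < t < t₂: E[‖ρ_n(t₂) - ρ_n(t)‖² · ‖ρ_n(t) - ρ_n(t₁)‖²] ≤ 4K² (t₂ - t₁)². -/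
open MeasureTheory Filter

/-! With `a = [nt₁]`, `b = [nt]`, `c = [nt₂]`, condition the product on `M_b`: the factor
`‖ρ_b - ρ_a‖²` is `M_b`-measurable and pulls out, the conditional bound turns `‖ρ_c - ρ_b‖²`
into `K (c - b) / n`, and taking expectations bounds `E ‖ρ_b - ρ_a‖²` by `K (b - a) / n`.
It remains to check `(c - b)(b - a) ≤ n² (t₂ - t₁)²`, an estimate on the rounding of the floors. -/

lemma floor_sub_floor_mul_floor_sub_floor_le_sq {x y z : ℝ} (hxy : x ≤ y) (hyz : y ≤ z) :
    ((⌊z⌋₊ : ℝ) - ⌊y⌋₊) * ((⌊y⌋₊ : ℝ) - ⌊x⌋₊) ≤ (z - x) ^ 2 := by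
  rcases (Nat.floor_mono hyz).eq_or_lt with hbc | hbc
  · rw [hbc, sub_self, zero_mul]
    positivity
  rcases (Nat.floor_mono hxy).eq_or_lt with hab | hab
  · rw [hab, sub_self, mul_zero]
    positivity
  -- both gaps are now positive, so `⌊z⌋₊ - ⌊x⌋₊ ≥ 2` absorbs the rounding error `+ 1` in
  -- `⌊z⌋₊ - ⌊x⌋₊ < z - x + 1`
  have hac : (⌊x⌋₊ : ℝ) + 2 ≤ ⌊z⌋₊ := by exact_mod_cast (by omega : ⌊x⌋₊ + 2 ≤ ⌊z⌋₊)
  have hcz : (⌊z⌋₊ : ℝ) ≤ z := Nat.floor_le (zero_le_one.trans (Nat.floor_pos.mp (by omega)))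
  have hxa := Nat.lt_floor_add_one x
  have hab' : (⌊x⌋₊ : ℝ) ≤ ⌊y⌋₊ := by exact_mod_cast hab.le
  have hbc' : (⌊y⌋₊ : ℝ) ≤ ⌊z⌋₊ := by exact_mod_cast hbc.le
  nlinarith [sq_nonneg ((⌊z⌋₊ : ℝ) + ⌊x⌋₊ - 2 * ⌊y⌋₊)]

lemma norm_sq_norm_sub_le {E : Type*} [SeminormedAddCommGroup E] {x y : E} {D : ℝ}
    (hx : ‖x‖ ≤ D) (hy : ‖y‖ ≤ D) : ‖‖x - y‖ ^ 2‖ ≤ (2 * D) ^ 2 := by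
  rw [Real.norm_of_nonneg (by positivity)]
  have hD := (norm_sub_le x y).trans (add_le_add hx hy)
  exact pow_le_pow_left₀ (norm_nonneg _) (by linarith) 2

section CondExp

variable {Ω : Type*} {m m₀ : MeasurableSpace Ω} {μ : Measure Ω} {f g : Ω → ℝ} {C : ℝ}

lemma nonneg_of_ae_condExp_le [NeZero μ] (hf : 0 ≤ᵐ[μ] f) (hC : ∀ᵐ ω ∂μ, μ[f|m] ω ≤ C) :
    0 ≤ C := by
  obtain ⟨ω, hω₀, hωC⟩ := ((condExp_nonneg hf).and hC).exists
  exact hω₀.trans hωC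

lemma integral_le_of_ae_condExp_le [IsProbabilityMeasure μ] (hm : m ≤ m₀)
    (hC : ∀ᵐ ω ∂μ, μ[f|m] ω ≤ C) : ∫ ω, f ω ∂μ ≤ C := by
  rw [← integral_condExp hm]
  simpa using integral_mono_ae integrable_condExp (integrable_const C) hC

lemma integral_mul_le_of_ae_condExp_le (hm : m ≤ m₀) [SigmaFinite (μ.trim hm)]
    (hf : StronglyMeasurable[m] f) (hf₀ : 0 ≤ᵐ[μ] f) (hfi : Integrable f μ)
    (hfg : Integrable (f * g) μ) (hg : Integrable g μ) (hC : ∀ᵐ ω ∂μ, μ[g|m] ω ≤ C) :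
    ∫ ω, f ω * g ω ∂μ ≤ C * ∫ ω, f ω ∂μ := by
  have hpull : μ[f * g|m] =ᵐ[μ] f * μ[g|m] := condExp_mul_of_stronglyMeasurable_left hf hfg hg
  calc ∫ ω, f ω * g ω ∂μ = ∫ ω, (μ[f * g|m]) ω ∂μ := (integral_condExp hm).symm
    _ = ∫ ω, f ω * (μ[g|m]) ω ∂μ := integral_congr_ae hpull
    _ ≤ ∫ ω, f ω * C ∂μ := by
      refine integral_mono_ae (integrable_condExp.congr hpull) (hfi.mul_const C) ?_
      filter_upwards [hf₀, hC] with ω hω₀ hωC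
      exact mul_le_mul_of_nonneg_left hωC hω₀
    _ = C * ∫ ω, f ω ∂μ := by rw [integral_mul_const, mul_comm]

end CondExp

namespace MeasureTheory.Adapted

variable {Ω ι E : Type*} {mΩ : MeasurableSpace Ω} {μ : Measure Ω} [Preorder ι]
  [NormedAddCommGroup E] [MeasurableSpace E] [OpensMeasurableSpace E] [SecondCountableTopology E]
  {F : Filtration ι mΩ} {X : ι → Ω → E} {D : ℝ}

lemma stronglyMeasurable_sq_norm_sub (hX : Adapted F X) {i j : ι} (hij : i ≤ j) :
    StronglyMeasurable[F j] fun ω => ‖X j ω - X i ω‖ ^ 2 :=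
  ((hX.stronglyAdapted j).sub ((hX.stronglyAdapted i).mono (F.mono hij))).norm.pow 2

lemma integrable_sq_norm_sub [IsFiniteMeasure μ] (hX : Adapted F X)
    (hbdd : ∀ i ω, ‖X i ω‖ ≤ D) {i j : ι} (hij : i ≤ j) :
    Integrable (fun ω => ‖X j ω - X i ω‖ ^ 2) μ :=
  .of_bound ((hX.stronglyMeasurable_sq_norm_sub hij).mono (F.le j)).aestronglyMeasurable _
    (ae_of_all _ fun ω => norm_sq_norm_sub_le (hbdd j ω) (hbdd i ω))

theorem integral_sq_norm_sub_mul_sq_norm_sub_le [IsProbabilityMeasure μ]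
    (hX : Adapted F X) (hbdd : ∀ i ω, ‖X i ω‖ ≤ D) {a b c : ι} (hab : a ≤ b) (hbc : b ≤ c)
    {C₁ C₂ : ℝ} (h₁ : ∀ᵐ ω ∂μ, μ[fun ω => ‖X b ω - X a ω‖ ^ 2|F a] ω ≤ C₁)
    (h₂ : ∀ᵐ ω ∂μ, μ[fun ω => ‖X c ω - X b ω‖ ^ 2|F b] ω ≤ C₂) :
    ∫ ω, ‖X c ω - X b ω‖ ^ 2 * ‖X b ω - X a ω‖ ^ 2 ∂μ ≤ C₂ * C₁ := by
  have hf := hX.stronglyMeasurable_sq_norm_sub hab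
  have hg := hX.integrable_sq_norm_sub (μ := μ) hbdd hbc
  have hfg : Integrable (fun ω => ‖X b ω - X a ω‖ ^ 2 * ‖X c ω - X b ω‖ ^ 2) μ :=
    hg.bdd_mul (hf.mono (F.le b)).aestronglyMeasurable
      (ae_of_all _ fun ω => norm_sq_norm_sub_le (hbdd b ω) (hbdd a ω))
  have hC₂ : 0 ≤ C₂ := nonneg_of_ae_condExp_le (ae_of_all _ fun ω => by positivity) h₂
  calc ∫ ω, ‖X c ω - X b ω‖ ^ 2 * ‖X b ω - X a ω‖ ^ 2 ∂μ
      = ∫ ω, ‖X b ω - X a ω‖ ^ 2 * ‖X c ω - X b ω‖ ^ 2 ∂μ := by simp_rw [mul_comm]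
    _ ≤ C₂ * ∫ ω, ‖X b ω - X a ω‖ ^ 2 ∂μ :=
      integral_mul_le_of_ae_condExp_le (F.le b) hf (ae_of_all _ fun ω => by positivity)
        (hX.integrable_sq_norm_sub hbdd hab) hfg hg h₂
    _ ≤ C₂ * C₁ := mul_le_mul_of_nonneg_left (integral_le_of_ae_condExp_le (F.le a) h₁) hC₂

end MeasureTheory.Adapted

theorem tightness_estimate_general (P n : ℕ) (K : ℝ)
    {Ω : Type*} {mΩ : MeasurableSpace Ω} (μ : Measure Ω) [IsProbabilityMeasure μ]
    (F : Filtration ℕ mΩ)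
    (ρ : ℕ → Ω → EuclideanSpace ℝ (Fin P)) (hadapted : Adapted F ρ)
    (D : ℝ) (hbdd : ∀ k ω, ‖ρ k ω‖ ≤ D)
    (hbound : ∀ r l : ℕ, r < l → ∀ᵐ ω ∂μ,
      (μ[(fun ω => ‖ρ l ω - ρ r ω‖ ^ 2)|F r]) ω ≤ K * (l - r : ℝ) / n) :
    ∀ t₁ t t₂ : ℝ, 0 ≤ t₁ → t₁ < t → t < t₂ →
      ∫ ω, ‖ρ ⌊(n : ℝ) * t₂⌋₊ ω - ρ ⌊(n : ℝ) * t⌋₊ ω‖ ^ 2 *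
          ‖ρ ⌊(n : ℝ) * t⌋₊ ω - ρ ⌊(n : ℝ) * t₁⌋₊ ω‖ ^ 2 ∂μ ≤
        4 * K ^ 2 * (t₂ - t₁) ^ 2 := by
  intro t₁ t t₂ _ ht₁ ht₂
  have hbound_le : ∀ r l : ℕ, r ≤ l → ∀ᵐ ω ∂μ,
      (μ[(fun ω => ‖ρ l ω - ρ r ω‖ ^ 2)|F r]) ω ≤ K * (l - r : ℝ) / n := by
    intro r l hrl
    rcases hrl.eq_or_lt with rfl | hrl
    · simp
    · exact hbound r l hrl
  have hn : (0 : ℝ) ≤ n := n.cast_nonneg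
  have hx := mul_le_mul_of_nonneg_left ht₁.le hn
  have hy := mul_le_mul_of_nonneg_left ht₂.le hn
  have hgaps := floor_sub_floor_mul_floor_sub_floor_le_sq hx hy
  set a := ⌊(n : ℝ) * t₁⌋₊
  set b := ⌊(n : ℝ) * t⌋₊
  set c := ⌊(n : ℝ) * t₂⌋₊
  have hab : a ≤ b := Nat.floor_mono hx
  have hbc : b ≤ c := Nat.floor_mono hy
  calc _ ≤ K * (c - b : ℝ) / n * (K * (b - a : ℝ) / n) :=
        hadapted.integral_sq_norm_sub_mul_sq_norm_sub_le hbdd hab hbc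
          (hbound_le a b hab) (hbound_le b c hbc)
    _ = K ^ 2 * ((c - b : ℝ) * (b - a) / n ^ 2) := by ring
    _ ≤ K ^ 2 * (t₂ - t₁) ^ 2 := by
      gcongr
      exact div_le_of_le_mul₀ (by positivity) (by positivity) (by linarith [hgaps])
    _ ≤ 4 * K ^ 2 * (t₂ - t₁) ^ 2 := by
      nlinarith [mul_nonneg (sq_nonneg K) (sq_nonneg (t₂ - t₁))]

/-- If the discrete process `(ρ_k)` adapted to `(M_k^{(n)})` satisfies
`E[‖ρ_l - ρ_r‖² | M_r^{(n)}] ≤ K (l - r)/n` a.s. for all `r < l`, then the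
piecewise-constant interpolation `ρ_n(t) = ρ_{[nt]}` satisfies, for all `t₁ < t < t₂`,
the tightness estimate
`E[‖ρ_n(t₂) - ρ_n(t)‖² ‖ρ_n(t) - ρ_n(t₁)‖²] ≤ 4 K² (t₂ - t₁)²`. -/
theorem tightness_estimate (P n : ℕ) (hn : 0 < n) (K : ℝ)
    {Ω : Type*} {mΩ : MeasurableSpace Ω} (μ : Measure Ω) [IsProbabilityMeasure μ]
    (F : Filtration ℕ mΩ)
    (ρ : ℕ → Ω → EuclideanSpace ℝ (Fin P)) (hadapted : Adapted F ρ)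
    (D : ℝ) (hbdd : ∀ k ω, ‖ρ k ω‖ ≤ D)
    (hbound : ∀ r l : ℕ, r < l → ∀ᵐ ω ∂μ,
      (μ[(fun ω => ‖ρ l ω - ρ r ω‖ ^ 2)|F r]) ω ≤ K * (l - r : ℝ) / n) :
    ∀ t₁ t t₂ : ℝ, 0 ≤ t₁ → t₁ < t → t < t₂ →
      ∫ ω, ‖ρ ⌊(n : ℝ) * t₂⌋₊ ω - ρ ⌊(n : ℝ) * t⌋₊ ω‖ ^ 2 *
          ‖ρ ⌊(n : ℝ) * t⌋₊ ω - ρ ⌊(n : ℝ) * t₁⌋₊ ω‖ ^ 2 ∂μ ≤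
        4 * K ^ 2 * (t₂ - t₁) ^ 2 :=
  tightness_estimate_general P n K μ F ρ hadapted D hbdd hbound
end
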